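/- The cube graph Q_3 (1-skeleton of the 3-dimensional cube) contains no W_6 minor. -/
import Mathlib

open SimpleGraph

/-- `H` is a minor of `G`: disjoint connected branch sets in `G`, one per vertex of `H`,
with an edge of `G` between branch sets of adjacent vertices of `H`. -/
def SimpleGraph.IsMinorOf {V W : Type*} (H : SimpleGraph W) (G : SimpleGraph V) : Prop :=
  ∃ B : W → Set V,
    (∀ w, (G.induce (B w)).Connected) ∧
    (Pairwise fun w₁ w₂ => Disjoint (B w₁) (B w₂)) ∧
    (∀ w₁ w₂, H.Adj w₁ w₂ → ∃ x ∈ B w₁, ∃ y ∈ B w₂, G.Adj x y)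

/-- The wheel `W₆`: hub `0` joined to the 6-cycle `1-2-3-4-5-6-1`. -/
def W6 : SimpleGraph (Fin 7) := SimpleGraph.fromEdgeSet
  {s(0,1), s(0,2), s(0,3), s(0,4), s(0,5), s(0,6),
   s(1,2), s(2,3), s(3,4), s(4,5), s(5,6), s(6,1)}

/-- `V₈`: the 8-cycle (vertices `0,…,7` standing for `1,…,8`) plus the four diagonals. -/
def V8 : SimpleGraph (Fin 8) := SimpleGraph.fromEdgeSet
  {s(0,1), s(1,2), s(2,3), s(3,4), s(4,5), s(5,6), s(6,7), s(7,0),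
   s(0,4), s(1,5), s(2,6), s(3,7)}

/-- The cube graph `Q₃` on 8 vertices: top face `0-1-2-3`, bottom face `4-5-6-7`,
vertical edges `i(i+4)`. -/
def cube : SimpleGraph (Fin 8) := SimpleGraph.fromEdgeSet
  {s(0,1), s(1,2), s(2,3), s(3,0), s(4,5), s(5,6), s(6,7), s(7,4),
   s(0,4), s(1,5), s(2,6), s(3,7)}

instance : DecidableRel cube.Adj := fun x y =>
  decidable_of_iff ((s(x,y) = s(0,1) ∨ s(x,y) = s(1,2) ∨ s(x,y) = s(2,3) ∨ s(x,y) = s(3,0) ∨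
    s(x,y) = s(4,5) ∨ s(x,y) = s(5,6) ∨ s(x,y) = s(6,7) ∨ s(x,y) = s(7,4) ∨
    s(x,y) = s(0,4) ∨ s(x,y) = s(1,5) ∨ s(x,y) = s(2,6) ∨ s(x,y) = s(3,7)) ∧ x ≠ y)
    (by simp [cube, SimpleGraph.fromEdgeSet_adj, Set.mem_insert_iff, Set.mem_singleton_iff])

instance : DecidableRel W6.Adj := fun x y =>
  decidable_of_iff ((s(x,y) = s(0,1) ∨ s(x,y) = s(0,2) ∨ s(x,y) = s(0,3) ∨ s(x,y) = s(0,4) ∨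
    s(x,y) = s(0,5) ∨ s(x,y) = s(0,6) ∨ s(x,y) = s(1,2) ∨ s(x,y) = s(2,3) ∨
    s(x,y) = s(3,4) ∨ s(x,y) = s(4,5) ∨ s(x,y) = s(5,6) ∨ s(x,y) = s(6,1)) ∧ x ≠ y)
    (by simp [W6, SimpleGraph.fromEdgeSet_adj, Set.mem_insert_iff, Set.mem_singleton_iff])

/-- Vertices distinct from `a` and `b` adjacent to `a` or `b` in the cube. -/
def cubeN2 (a b : Fin 8) : Finset (Fin 8) :=
  Finset.univ.filter (fun v => v ≠ a ∧ v ≠ b ∧ (cube.Adj a v ∨ cube.Adj b v))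

lemma cubeN2_card_self : ∀ a : Fin 8, (cubeN2 a a).card ≤ 4 := by decide

lemma cubeN2_card_adj : ∀ a b : Fin 8, cube.Adj a b → (cubeN2 a b).card ≤ 4 := by decide

lemma exists_adj_of_reachable {V : Type*} {G : SimpleGraph V} {u v : V}
    (h : G.Reachable u v) (hne : u ≠ v) : ∃ w, G.Adj u w := by
  obtain ⟨p⟩ := h
  cases p with
  | nil => exact absurd rfl hne
  | cons h _ => exact ⟨_, h⟩

/-- The cube contains no `W₆` minor. -/
theorem stmt5 : ¬ W6.IsMinorOf cube := by
  classical
  rintro ⟨B, hconn, hdisj, hadj⟩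
  have hub : ∀ i : Fin 6, W6.Adj 0 i.succ := by decide
  choose x hx y hy hxy using fun i => hadj 0 i.succ (hub i)
  have hyinj : Function.Injective y := by
    intro i j hij
    by_contra hne
    have hne7 : (i.succ : Fin 7) ≠ j.succ := fun h => hne (Fin.succ_injective _ h)
    exact Set.disjoint_left.mp (hdisj hne7) (hy i) (hij ▸ hy j)
  have hynot0 : ∀ i, y i ∉ B 0 := fun i h =>
    Set.disjoint_left.mp (hdisj (show (0 : Fin 7) ≠ i.succ from (Fin.succ_ne_zero i).symm))
      h (hy i)
  set T : Finset (Fin 8) := Finset.univ.filter (· ∈ B 0) with hTdef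
  have hT : ∀ v, v ∈ T ↔ v ∈ B 0 := by intro v; simp [hTdef]
  have himcard : (Finset.image y Finset.univ).card = 6 := by
    rw [Finset.card_image_of_injective _ hyinj]; simp
  have hTcard : T.card ≤ 2 := by
    have hsub : T ⊆ Finset.univ \ Finset.image y Finset.univ := by
      intro v hv
      simp only [Finset.mem_sdiff, Finset.mem_univ, true_and, Finset.mem_image]
      rintro ⟨i, -, rfl⟩
      exact hynot0 i ((hT _).mp hv)
    have := Finset.card_le_card hsub
    rw [Finset.card_sdiff_of_subset (Finset.subset_univ _), himcard] at this
    simpa using this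
  have hTne : T.Nonempty := by
    obtain ⟨⟨a, ha⟩⟩ := (hconn 0).nonempty
    exact ⟨a, (hT a).mpr ha⟩
  have key : ∃ a b : Fin 8, a ∈ B 0 ∧ b ∈ B 0 ∧ (∀ v ∈ B 0, v = a ∨ v = b) ∧
      (cubeN2 a b).card ≤ 4 := by
    have h12 : T.card = 1 ∨ T.card = 2 := by
      have := hTne.card_pos; omega
    rcases h12 with h1 | h2
    · obtain ⟨a, hTa⟩ := Finset.card_eq_one.mp h1
      have ha : a ∈ B 0 := (hT a).mp (hTa ▸ Finset.mem_singleton_self a)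
      refine ⟨a, a, ha, ha, ?_, cubeN2_card_self a⟩
      intro v hv
      have : v ∈ T := (hT v).mpr hv
      rw [hTa, Finset.mem_singleton] at this
      exact Or.inl this
    · obtain ⟨a, b, hab, hTab⟩ := Finset.card_eq_two.mp h2
      have ha : a ∈ B 0 := (hT a).mp (by rw [hTab]; simp)
      have hb : b ∈ B 0 := (hT b).mp (by rw [hTab]; simp)
      have hcover : ∀ v ∈ B 0, v = a ∨ v = b := by
        intro v hv
        have : v ∈ T := (hT v).mpr hv
        rw [hTab] at this
        simpa using this
      have hne : (⟨a, ha⟩ : (B 0)) ≠ ⟨b, hb⟩ := fun h => hab (congrArg Subtype.val h)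
      obtain ⟨w, hw⟩ := exists_adj_of_reachable ((hconn 0).preconnected ⟨a, ha⟩ ⟨b, hb⟩) hne
      have hadjaw : cube.Adj a w.1 := hw
      have hwb : w.1 = b := by
        rcases hcover w.1 w.2 with h | h
        · exact absurd (h ▸ hadjaw) (cube.irrefl)
        · exact h
      exact ⟨a, b, ha, hb, hcover, cubeN2_card_adj a b (hwb ▸ hadjaw)⟩
  obtain ⟨a, b, ha, hb, hcover, hcard⟩ := key
  have hsub : Finset.image y Finset.univ ⊆ cubeN2 a b := by
    intro v hv
    rw [Finset.mem_image] at hv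
    obtain ⟨i, -, rfl⟩ := hv
    simp only [cubeN2, Finset.mem_filter, Finset.mem_univ, true_and]
    refine ⟨fun h => hynot0 i (h ▸ ha), fun h => hynot0 i (h ▸ hb), ?_⟩
    rcases hcover _ (hx i) with h | h
    · exact Or.inl (h ▸ hxy i)
    · exact Or.inr (h ▸ hxy i)
  have := Finset.card_le_card hsub
  rw [himcard] at this
  omega
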